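/- Let $v>1$ and $t>1$ be odd. If there exists a $(v,2;2\lambda,\frac{v-1}{2};\lambda,\lambda)$-GSEDF in an abelian group $G$ of order $v$, then there exists a $(vt,2;4\lambda,\frac{vt-1}{2};2\lambda,2\lambda)$-GSEDF in $G\times\mathbb{Z}_t$. -/

import Mathlib

/-!
Let `O = {0, 1, 3, …, t - 2} ⊆ ℤ_t`, so that the new family is `D₁ × {0, 1}` and
`D₂ × O ∪ (G ∖ D₂) × Oᶜ`. External differences factor over the product:
`Δ(D₁', D₂')(g, c) = Δ(D₁, D₂)(g) · Δ({0,1}, O)(c) + Δ(D₁, G ∖ D₂)(g) · Δ({0,1}, Oᶜ)(c)`.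
If `c ≠ 0`, exactly one of `-c`, `1 - c` lies in `O`, so both `ℤ_t`-factors are `1` and the sum is
`|D₁| = 2λ`. If `c = 0`, then `g ≠ 0`, both `G`-factors are `λ` and the `ℤ_t`-factors add up to
`|{0, 1}| = 2`. Since `Δ(D₂', D₁')` is the negative of `Δ(D₁', D₂')`, this one count suffices.
-/

/-- The number of times `g` occurs in the multiset `Δ(A,B) = {x - y : x ∈ A, y ∈ B}`. -/
noncomputable def extDiffCount {G : Type*} [AddCommGroup G] (A B : Finset G) (g : G) : ℕ :=
  letI := Classical.decEq G
  ((A ×ˢ B).filter (fun p => p.1 - p.2 = g)).card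

/-- `{D i}` is a `(v, m; k₁,…,k_m; λ₁,…,λ_m)`-GSEDF in the finite abelian group `G`. -/
def IsGSEDF {G : Type*} [AddCommGroup G] [Fintype G] (v m : ℕ)
    (D : Fin m → Finset G) (k lam : Fin m → ℕ) : Prop :=
  Fintype.card G = v ∧
  (∀ i, (D i).card = k i) ∧
  (∀ i, 0 < k i) ∧ (∀ i, 0 < lam i) ∧
  (∀ i j, i ≠ j → Disjoint (D i) (D j)) ∧
  ∀ i, ∀ g : G, g ≠ 0 →
    (∑ j ∈ Finset.univ.filter (· ≠ i), extDiffCount (D i) (D j) g) = lam i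

open Finset

section ExtDiffCount

variable {H K : Type*} [AddCommGroup H] [AddCommGroup K] [DecidableEq H] [DecidableEq K]

lemma extDiffCount_eq_card_filter (A B : Finset H) (g : H) :
    extDiffCount A B g = #{a ∈ A | a - g ∈ B} := by
  unfold extDiffCount
  refine card_nbij' Prod.fst (fun a => (a, a - g)) ?_ ?_ ?_ ?_
  · rintro ⟨a, b⟩ h
    simp only [mem_coe, mem_filter, mem_product] at h
    obtain ⟨⟨ha, hb⟩, rfl⟩ := h
    simpa using ⟨ha, hb⟩
  · intro a h
    simp_all
  · rintro ⟨a, b⟩ h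
    simp_all [sub_eq_iff_eq_add]
  · intro a _
    rfl

lemma extDiffCount_comm (A B : Finset H) (g : H) :
    extDiffCount A B g = extDiffCount B A (-g) := by
  simp only [extDiffCount_eq_card_filter, sub_neg_eq_add]
  refine card_nbij' (· - g) (· + g) ?_ ?_ ?_ ?_ <;> intro x hx <;> simp_all

lemma extDiffCount_add_extDiffCount_compl [Fintype H] (A B : Finset H) (g : H) :
    extDiffCount A B g + extDiffCount A Bᶜ g = #A := by
  simp only [extDiffCount_eq_card_filter, mem_compl]
  exact card_filter_add_card_filter_not _

lemma extDiffCount_union_right {A B C : Finset H} (hBC : Disjoint B C) (g : H) :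
    extDiffCount A (B ∪ C) g = extDiffCount A B g + extDiffCount A C g := by
  simp only [extDiffCount_eq_card_filter, mem_union, filter_or]
  exact card_union_of_disjoint <| disjoint_filter.2 fun _ _ hB hC => disjoint_left.1 hBC hB hC

lemma extDiffCount_product (A B : Finset H) (P Q : Finset K) (g : H) (c : K) :
    extDiffCount (A ×ˢ P) (B ×ˢ Q) (g, c) = extDiffCount A B g * extDiffCount P Q c := by
  simp only [extDiffCount_eq_card_filter, Prod.fst_sub, Prod.snd_sub, mem_product]
  rw [filter_product (· - g ∈ B) (· - c ∈ Q), card_product]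

lemma extDiffCount_product_union_compl [Fintype H] [Fintype K]
    (A B : Finset H) (P O : Finset K) (g : H) (c : K) :
    extDiffCount (A ×ˢ P) (B ×ˢ O ∪ Bᶜ ×ˢ Oᶜ) (g, c) =
      extDiffCount A B g * extDiffCount P O c + extDiffCount A Bᶜ g * extDiffCount P Oᶜ c := by
  rw [extDiffCount_union_right (disjoint_product.2 (.inl disjoint_compl_right)),
    extDiffCount_product, extDiffCount_product]

end ExtDiffCount

lemma isGSEDF_pair_iff {G : Type*} [AddCommGroup G] [Fintype G] {v k₀ k₁ μ : ℕ}
    {A B : Finset G} :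
    IsGSEDF v 2 ![A, B] ![k₀, k₁] ![μ, μ] ↔
      Fintype.card G = v ∧ #A = k₀ ∧ #B = k₁ ∧ 0 < k₀ ∧ 0 < k₁ ∧ 0 < μ ∧ Disjoint A B ∧
        ∀ g ≠ 0, extDiffCount A B g = μ := by
  classical
  have hBA (h : ∀ g ≠ 0, extDiffCount A B g = μ) (g : G) (hg : g ≠ 0) :
      extDiffCount B A g = μ := by
    rw [extDiffCount_comm]
    exact h _ (neg_ne_zero.2 hg)
  simp only [IsGSEDF, Fin.forall_fin_two, sum_filter, Fin.sum_univ_two]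
  simp [disjoint_comm (a := B)]
  tauto

section OddOrZero

variable (t : ℕ) [NeZero t]

def oddOrZero : Finset (ZMod t) := {x | x.val = 0 ∨ Odd x.val}

variable {t}

lemma mem_oddOrZero {x : ZMod t} : x ∈ oddOrZero t ↔ x.val = 0 ∨ Odd x.val := by
  simp [oddOrZero]

lemma pair_subset_oddOrZero : ({0, 1} : Finset (ZMod t)) ⊆ oddOrZero t := by
  simp only [insert_subset_iff, singleton_subset_iff, mem_oddOrZero, ZMod.val_zero,
    ZMod.val_one_eq_one_mod]
  rcases eq_or_ne t 1 with rfl | ht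
  · simp
  · simp [Nat.one_mod_eq_one.2 ht]

lemma add_one_mem_oddOrZero_iff (ht : Odd t) {z : ZMod t} (hz : z ≠ 0) :
    z + 1 ∈ oddOrZero t ↔ z ∉ oddOrZero t := by
  have hzv : z.val ≠ 0 := (ZMod.val_ne_zero z).2 hz
  have hlt := ZMod.val_lt z
  have hval : (z + 1).val = (z.val + 1) % t := by
    rw [ZMod.val_add, ZMod.val_one_eq_one_mod, Nat.add_mod_mod]
  obtain ⟨m, rfl⟩ := ht
  rcases Nat.lt_or_ge (z.val + 1) (2 * m + 1) with h | h
  · rw [mem_oddOrZero, mem_oddOrZero, hval, Nat.mod_eq_of_lt h]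
    simp only [Nat.odd_iff]
    omega
  · rw [mem_oddOrZero, mem_oddOrZero, hval, show z.val + 1 = 2 * m + 1 by omega, Nat.mod_self]
    simp only [Nat.odd_iff, true_or, true_iff]
    omega

lemma extDiffCount_pair_oddOrZero (ht : Odd t) {c : ZMod t} (hc : c ≠ 0) :
    extDiffCount {0, 1} (oddOrZero t) c = 1 := by
  have : Nontrivial (ZMod t) := nontrivial_of_ne c 0 hc
  rw [extDiffCount_eq_card_filter, card_filter, sum_pair zero_ne_one, zero_sub, sub_eq_neg_add]
  simp only [add_one_mem_oddOrZero_iff ht (neg_ne_zero.2 hc)]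
  by_cases h : -c ∈ oddOrZero t <;> simp [h]

/-- Translation by one maps the complement bijectively onto `oddOrZero t` minus `1`. -/
lemma card_compl_oddOrZero_add_one (ht : Odd t) : #(oddOrZero t)ᶜ + 1 = #(oddOrZero t) := by
  have h₀ : (0 : ZMod t) ∈ oddOrZero t := pair_subset_oddOrZero (by simp)
  have h₁ : (1 : ZMod t) ∈ oddOrZero t := pair_subset_oddOrZero (by simp)
  rw [← card_erase_add_one h₁]
  congr 1
  refine card_nbij' (· + 1) (· - 1) ?_ ?_ ?_ ?_
  · intro z hz
    have hz0 : z ≠ 0 := by rintro rfl; simp_all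
    simp_all [add_one_mem_oddOrZero_iff ht hz0]
  · intro y hy
    simp only [coe_erase, Set.mem_sdiff, mem_coe, Set.mem_singleton_iff] at hy
    have hy0 : y - 1 ≠ 0 := sub_ne_zero.2 hy.2
    simpa [← add_one_mem_oddOrZero_iff ht hy0] using hy.1
  · intro z _; simp
  · intro y _; simp

lemma card_oddOrZero (ht : Odd t) : #(oddOrZero t) = (t + 1) / 2 := by
  have h := card_compl_oddOrZero_add_one ht
  have hc := card_compl (oddOrZero t)
  have hle := card_le_univ (oddOrZero t)
  rw [ZMod.card] at hc hle
  omega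

end OddOrZero

lemma odd_mul_odd_sub_one_div_two {v t : ℕ} (hv : Odd v) (ht : Odd t) :
    (v - 1) / 2 * ((t + 1) / 2) + (v - (v - 1) / 2) * (t - (t + 1) / 2) = (v * t - 1) / 2 := by
  obtain ⟨m, rfl⟩ := hv
  obtain ⟨b, rfl⟩ := ht
  rw [show (2 * m + 1 - 1) / 2 = m by omega, show (2 * b + 1 + 1) / 2 = b + 1 by omega,
    show 2 * m + 1 - m = m + 1 by omega, show 2 * b + 1 - (b + 1) = b by omega,
    show (2 * m + 1) * (2 * b + 1) - 1 = 2 * (2 * m * b + m + b) by ring_nf; omega,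
    Nat.mul_div_cancel_left _ two_pos]
  ring

theorem IsGSEDF.product_union_compl {H K : Type*} [AddCommGroup H] [Fintype H] [DecidableEq H]
    [AddCommGroup K] [Fintype K] [DecidableEq K] {v k lam : ℕ} {A B : Finset H}
    (h : IsGSEDF v 2 ![A, B] ![2 * lam, k] ![lam, lam])
    {P O : Finset K} (hP : #P = 2) (hPO : P ⊆ O)
    (hPO_diff : ∀ c ≠ 0, extDiffCount P O c = 1) :
    IsGSEDF (v * Fintype.card K) 2 ![A ×ˢ P, B ×ˢ O ∪ Bᶜ ×ˢ Oᶜ]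
      ![4 * lam, k * #O + (v - k) * (Fintype.card K - #O)] ![2 * lam, 2 * lam] := by
  obtain ⟨hv, hA, hB, -, hk, hlam, hAB, hΔ⟩ := isGSEDF_pair_iff.1 h
  have hO : 0 < #O := by have := card_le_card hPO; omega
  refine isGSEDF_pair_iff.2 ⟨by rw [Fintype.card_prod, hv], ?_, ?_, by omega,
    Nat.add_pos_left (Nat.mul_pos hk hO) _, by omega, ?_, ?_⟩
  · rw [card_product, hA, hP]
    ring
  · rw [card_union_of_disjoint (disjoint_product.2 (.inl disjoint_compl_right)),
      card_product, card_product, card_compl, card_compl, hv, hB]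
  · exact disjoint_union_right.2 ⟨disjoint_product.2 (.inl hAB),
      disjoint_product.2 (.inr (disjoint_compl_right.mono_left hPO))⟩
  rintro ⟨g, c⟩ hgc
  have hA_split := extDiffCount_add_extDiffCount_compl A B g
  have hP_split := extDiffCount_add_extDiffCount_compl P O c
  rw [extDiffCount_product_union_compl]
  by_cases hc : c = 0
  · have hg : g ≠ 0 := by rintro rfl; exact hgc (by rw [hc]; rfl)
    rw [hΔ g hg] at hA_split ⊢
    rw [show extDiffCount A Bᶜ g = lam by omega, ← mul_add, hP_split, hP]
    ring
  · rw [hPO_diff c hc] at hP_split ⊢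
    rw [show extDiffCount P Oᶜ c = 1 by omega, mul_one, mul_one, hA_split, hA]

theorem gsedf_recursive_construction_general {G : Type*} [AddCommGroup G] [Fintype G]
    (v t lam : ℕ) [NeZero t] (ht : 1 < t)
    (hvodd : Odd v) (htodd : Odd t)
    (D : Fin 2 → Finset G)
    (h : IsGSEDF v 2 D ![2 * lam, (v - 1) / 2] ![lam, lam]) :
    ∃ D' : Fin 2 → Finset (G × ZMod t),
      IsGSEDF (v * t) 2 D' ![4 * lam, (v * t - 1) / 2] ![2 * lam, 2 * lam] := by
  classical
  have : Fact (1 < t) := ⟨ht⟩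
  rw [show D = ![D 0, D 1] by ext i : 1; fin_cases i <;> rfl] at h
  have h' := h.product_union_compl (card_pair zero_ne_one) pair_subset_oddOrZero
    fun _ => extDiffCount_pair_oddOrZero htodd
  rw [ZMod.card, card_oddOrZero htodd, odd_mul_odd_sub_one_div_two hvodd htodd] at h'
  exact ⟨_, h'⟩

/-- the recursive construction. From a
`(v, 2; 2λ, (v-1)/2; λ, λ)`-GSEDF in `G` (with `v, t > 1` odd) one obtains a
`(vt, 2; 4λ, (vt-1)/2; 2λ, 2λ)`-GSEDF in `G × ℤ_t`. -/
theorem gsedf_recursive_construction {G : Type*} [AddCommGroup G] [Fintype G]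
    (v t lam : ℕ) [NeZero t] (hv : 1 < v) (ht : 1 < t)
    (hvodd : Odd v) (htodd : Odd t) (hl : 0 < lam)
    (D : Fin 2 → Finset G)
    (h : IsGSEDF v 2 D ![2 * lam, (v - 1) / 2] ![lam, lam]) :
    ∃ D' : Fin 2 → Finset (G × ZMod t),
      IsGSEDF (v * t) 2 D' ![4 * lam, (v * t - 1) / 2] ![2 * lam, 2 * lam] :=
  gsedf_recursive_construction_general v t lam ht hvodd htodd D h
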